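/- Polyhedral rotation groups do not act on coplanar point sets: for every nonzero vector v ∈ ℝ³, the orbit G_tet·v = {A·v : A ∈ G_tet} is not contained in any affine subspace of ℝ³ of dimension at most 2 (i.e., the orbit is not coplanar). -/

import Mathlib

open Matrix

/-- A 3×3 real matrix is a rotation if it is orthogonal with determinant 1. -/
def IsRotation (A : Matrix (Fin 3) (Fin 3) ℝ) : Prop := Aᵀ * A = 1 ∧ A.det = 1

/-- The action of a 3×3 matrix on ℝ³ by matrix–vector multiplication. -/
noncomputable def act (A : Matrix (Fin 3) (Fin 3) ℝ) (v : EuclideanSpace ℝ (Fin 3)) :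
    EuclideanSpace ℝ (Fin 3) := WithLp.toLp 2 (A.mulVec v)

/-- The orbit of a point under a set of matrices. -/
def orb (G : Set (Matrix (Fin 3) (Fin 3) ℝ)) (v : EuclideanSpace ℝ (Fin 3)) :
    Set (EuclideanSpace ℝ (Fin 3)) := {q | ∃ A ∈ G, act A v = q}

/-- The vertices of a regular tetrahedron inscribed in the cube [−1,1]³. -/
noncomputable def Vtet : Set (EuclideanSpace ℝ (Fin 3)) :=
  {!₂[1, 1, 1], !₂[1, -1, -1], !₂[-1, 1, -1], !₂[-1, -1, 1]}

/-- The tetrahedral rotation group: all rotations preserving `Vtet` setwise. -/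
noncomputable def Gtet : Set (Matrix (Fin 3) (Fin 3) ℝ) :=
  {A | IsRotation A ∧ act A '' Vtet = Vtet}

/-! The tetrahedral group contains the half-turns about the three coordinate axes and the
cyclic permutations of the coordinates. The half-turn images of `v` average with `v` to `0`,
so an affine subspace containing the orbit passes through `0` and is a linear subspace `W`.
Since `w + (half-turn about axis j) w = 2 w_j e_j`, the subspace `W` contains `w_j e_j` for
every orbit point `w`; cyclically permuting `v` moves a nonzero coordinate into each position,
so `W` contains `e₀, e₁, e₂` and is all of `ℝ³`. -/

def halfTurn (j : Fin 3) : Matrix (Fin 3) (Fin 3) ℝ := diagonal fun k => if k = j then 1 else -1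

def cyclicShift (k : Fin 3) : Matrix (Fin 3) (Fin 3) ℝ := (Equiv.addRight k).permMatrix ℝ

lemma act_mul (A B : Matrix (Fin 3) (Fin 3) ℝ) (x : EuclideanSpace ℝ (Fin 3)) :
    act (A * B) x = act A (act B x) := by
  simp [act, mulVec_mulVec]

lemma act_injective {A : Matrix (Fin 3) (Fin 3) ℝ} (hA : Aᵀ * A = 1) :
    Function.Injective (act A) := by
  intro x y hxy
  simpa [← act_mul, hA, act] using congrArg (act Aᵀ) hxy

lemma act_image_Vtet_eq_of_mapsTo {A : Matrix (Fin 3) (Fin 3) ℝ} (hA : Aᵀ * A = 1)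
    (hmaps : Set.MapsTo (act A) Vtet Vtet) : act A '' Vtet = Vtet :=
  Set.eq_of_subset_of_ncard_le hmaps.image_subset
    (Set.ncard_image_of_injective _ (act_injective hA)).ge (by simp [Vtet])

lemma one_mem_Gtet : (1 : Matrix (Fin 3) (Fin 3) ℝ) ∈ Gtet :=
  ⟨⟨by simp, by simp⟩, act_image_Vtet_eq_of_mapsTo (by simp) (by simp [Set.MapsTo, act])⟩

lemma mul_mem_Gtet {A B : Matrix (Fin 3) (Fin 3) ℝ} (hA : A ∈ Gtet) (hB : B ∈ Gtet) :
    A * B ∈ Gtet := by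
  obtain ⟨⟨hA_orth, hA_det⟩, hA_Vtet⟩ := hA
  obtain ⟨⟨hB_orth, hB_det⟩, hB_Vtet⟩ := hB
  refine ⟨⟨?_, by rw [det_mul, hA_det, hB_det, one_mul]⟩, ?_⟩
  · rw [transpose_mul, mul_assoc, ← mul_assoc Aᵀ, hA_orth, one_mul, hB_orth]
  · rw [show act (A * B) = act A ∘ act B from funext (act_mul A B), Set.image_comp, hB_Vtet,
      hA_Vtet]

noncomputable def tetrahedralSubmonoid : Submonoid (Matrix (Fin 3) (Fin 3) ℝ) where
  carrier := Gtet
  one_mem' := one_mem_Gtet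
  mul_mem' := mul_mem_Gtet

lemma halfTurn_mem_Gtet (j : Fin 3) : halfTurn j ∈ Gtet := by
  have h_orth : (halfTurn j)ᵀ * halfTurn j = 1 := by
    rw [halfTurn, diagonal_transpose, diagonal_mul_diagonal, ← diagonal_one]
    congr 1
    ext k
    split_ifs <;> norm_num
  refine ⟨⟨h_orth, ?_⟩, act_image_Vtet_eq_of_mapsTo h_orth ?_⟩
  · fin_cases j <;> simp [halfTurn, Fin.prod_univ_three]
  · fin_cases j <;> rintro x (rfl | rfl | rfl | rfl) <;>
      simp [Vtet, act, halfTurn, mulVec_diagonal, funext_iff, Fin.forall_fin_succ]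

lemma cyclicShift_mem_Gtet (k : Fin 3) : cyclicShift k ∈ Gtet := by
  have h_orth : (cyclicShift k)ᵀ * cyclicShift k = 1 := by
    rw [cyclicShift, transpose_permMatrix, ← permMatrix_mul, mul_inv_cancel, permMatrix_one]
  refine ⟨⟨h_orth, ?_⟩, act_image_Vtet_eq_of_mapsTo h_orth ?_⟩
  · fin_cases k <;> simp [cyclicShift] <;> decide
  · fin_cases k <;> rintro x (rfl | rfl | rfl | rfl) <;>
      simp [Vtet, act, cyclicShift, permMatrix_mulVec, funext_iff, Fin.forall_fin_succ]

lemma sum_halfTurn : ∑ j, halfTurn j = -1 := by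
  ext a b
  fin_cases a <;> fin_cases b <;> simp [halfTurn, Fin.sum_univ_three, Matrix.sum_apply]

lemma add_act_halfTurn (w : EuclideanSpace ℝ (Fin 3)) (j : Fin 3) :
    w + act (halfTurn j) w = (2 : ℝ) • EuclideanSpace.single j (w j) := by
  ext k
  rcases eq_or_ne k j with rfl | hk
  · simp [act, halfTurn, mulVec_diagonal, two_mul]
  · simp [act, halfTurn, mulVec_diagonal, hk]

section

variable {G : Submonoid (Matrix (Fin 3) (Fin 3) ℝ)} {v w : EuclideanSpace ℝ (Fin 3)}

lemma self_mem_orb : v ∈ orb G v := ⟨1, G.one_mem, by simp [act]⟩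

lemma act_mem_orb {A : Matrix (Fin 3) (Fin 3) ℝ} (hA : A ∈ G) (hw : w ∈ orb G v) :
    act A w ∈ orb G v := by
  obtain ⟨B, hB, rfl⟩ := hw
  exact ⟨A * B, G.mul_mem hA hB, act_mul A B v⟩

lemma zero_mem_of_orb_subset (hG : ∀ j, halfTurn j ∈ G)
    {s : AffineSubspace ℝ (EuclideanSpace ℝ (Fin 3))} (hs : orb G v ⊆ s) :
    (0 : EuclideanSpace ℝ (Fin 3)) ∈ s := by
  have hv : v ∈ s := hs self_mem_orb
  have hdiff (j : Fin 3) : act (halfTurn j) v -ᵥ v ∈ s.direction :=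
    s.vsub_mem_direction (hs (act_mem_orb (hG j) self_mem_orb)) hv
  have hcentroid : (0 : EuclideanSpace ℝ (Fin 3)) -ᵥ v =
      (4 : ℝ)⁻¹ • ∑ j, (act (halfTurn j) v -ᵥ v) := by
    have hsum : ∑ j, act (halfTurn j) v = -v := by
      simp only [act, ← WithLp.toLp_sum, ← sum_mulVec, sum_halfTurn, neg_mulVec, one_mulVec,
        WithLp.toLp_neg, WithLp.toLp_ofLp]
    simp only [vsub_eq_sub, Finset.sum_sub_distrib, hsum, Finset.sum_const, Finset.card_univ,
      Fintype.card_fin]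
    module
  rw [← vsub_vadd (0 : EuclideanSpace ℝ (Fin 3)) v, hcentroid]
  exact s.vadd_mem_of_mem_direction
    (s.direction.smul_mem _ (s.direction.sum_mem fun j _ => hdiff j)) hv

lemma orb_subset_direction (hG : ∀ j, halfTurn j ∈ G)
    {s : AffineSubspace ℝ (EuclideanSpace ℝ (Fin 3))} (hs : orb G v ⊆ s) :
    orb G v ⊆ s.direction := fun w hw => by
  simpa using s.vsub_mem_direction (hs hw) (zero_mem_of_orb_subset hG hs)

lemma single_mem_of_orb_subset (hG : ∀ j, halfTurn j ∈ G)
    {W : Submodule ℝ (EuclideanSpace ℝ (Fin 3))} (hW : orb G v ⊆ W) (hw : w ∈ orb G v)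
    (j : Fin 3) : EuclideanSpace.single j (w j) ∈ W := by
  have h2 : (2 : ℝ) • EuclideanSpace.single j (w j) ∈ W := by
    rw [← add_act_halfTurn]
    exact W.add_mem (hW hw) (hW (act_mem_orb (hG j) hw))
  simpa using W.smul_mem (2 : ℝ)⁻¹ h2

lemma eq_top_of_orb_subset (hG : ∀ j, halfTurn j ∈ G) (hC : ∀ k, cyclicShift k ∈ G)
    {W : Submodule ℝ (EuclideanSpace ℝ (Fin 3))} (hW : orb G v ⊆ W) (hv : v ≠ 0) : W = ⊤ := by
  obtain ⟨i, hi⟩ : ∃ i, v i ≠ 0 := by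
    contrapose! hv
    ext i
    exact hv i
  have hbasis (j : Fin 3) : EuclideanSpace.single j (1 : ℝ) ∈ W := by
    have hshift := single_mem_of_orb_subset hG hW (act_mem_orb (hC (i - j)) self_mem_orb) j
    simp only [act, cyclicShift, permMatrix_mulVec, Function.comp_apply, Equiv.coe_addRight,
      add_sub_cancel] at hshift
    convert W.smul_mem (v i)⁻¹ hshift using 1
    ext k
    by_cases hk : k = j <;> simp [hk, hi]
  rw [eq_top_iff, ← (EuclideanSpace.basisFun (Fin 3) ℝ).toBasis.span_eq, Submodule.span_le]
  rintro _ ⟨j, rfl⟩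
  simpa using hbasis j

end

/-- The orbit of a nonzero vector under the tetrahedral rotation group is never
coplanar: it is not contained in any affine subspace of dimension at most 2. -/
theorem tetrahedral_orbit_not_coplanar (v : EuclideanSpace ℝ (Fin 3)) (hv : v ≠ 0) :
    ¬ ∃ s : AffineSubspace ℝ (EuclideanSpace ℝ (Fin 3)),
        Module.finrank ℝ s.direction ≤ 2 ∧
        orb Gtet v ⊆ (s : Set (EuclideanSpace ℝ (Fin 3))) := by
  rintro ⟨s, hdim, hs⟩
  have hdir : s.direction = ⊤ :=
    eq_top_of_orb_subset (G := tetrahedralSubmonoid) halfTurn_mem_Gtet cyclicShift_mem_Gtet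
      (orb_subset_direction halfTurn_mem_Gtet hs) hv
  rw [hdir, finrank_top, finrank_euclideanSpace_fin] at hdim
  omega
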